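/- arXiv:2308.11425 — 2 statements merged into one kernel-verified Lean document; each statement's English description precedes it below -/
import Mathlib

section
/- Let V and W be finite-dimensional complex vector spaces equipped with nondegenerate symmetric bilinear forms, and let g and h be diagonalizable linear automorphisms of V and W that are isometries of the respective forms. If det(g) = −1 and det(h) = 1, then dim E_{−1}(g ⊗ h) ≡ dim W (mod 2); in particular it is odd when dim W is odd and even when dim W is even. -/
/-!
The form `BV ⊗ BW` on `V ⊗ W` is nondegenerate, and `g ⊗ h` is a diagonalizable isometry of it.
For a diagonalizable isometry `f` of a nondegenerate form, `E_λ(f)` is orthogonal to `E_μ(f)`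
unless `λμ = 1`, so the form pairs `E_λ` nondegenerately with `E_{λ⁻¹}` and
`dim E_λ = dim E_{λ⁻¹}`. In `det f = ∏ λ ^ dim E_λ` the factors for `λ` and `λ⁻¹` then cancel,
leaving `det f = (-1) ^ dim E_{-1}(f)`. On the other hand
`det (g ⊗ h) = det g ^ dim W * det h ^ dim V = (-1) ^ dim W`.
-/

open TensorProduct Module

theorem Finset.prod_pow_eq_neg_one_pow_of_inv_invariant {K : Type*} [Field K] (s : Finset K)
    (d : K → ℕ) (hs : ∀ μ, d μ ≠ 0 → μ ∈ s) (h0 : d 0 = 0) (hinv : ∀ μ, d μ⁻¹ = d μ) :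
    ∏ μ ∈ s, μ ^ d μ = (-1) ^ d (-1) := by
  classical
  rw [← prod_filter_of_ne (p := fun μ => d μ ≠ 0) fun μ _ h hd => by simp [hd] at h]
  set t := {μ ∈ s | d μ ≠ 0}
  have ht : ∀ μ, μ ∈ t ↔ d μ ≠ 0 := fun μ => by
    simpa only [t, mem_filter, and_iff_right_iff_imp] using hs μ
  have hne : ∀ μ ∈ t, μ ≠ 0 := by rintro μ hμ rfl; exact (ht 0).mp hμ h0
  have hpair : ∏ μ ∈ t.erase (-1), μ ^ d μ = 1 := by
    refine prod_involution (fun μ _ => μ⁻¹) (fun μ hμ => ?_) (fun μ hμ h1 hfix => ?_)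
      (fun μ hμ => ?_) (fun μ _ => inv_inv μ)
    · rw [hinv, ← mul_pow, mul_inv_cancel₀ (hne μ (mem_of_mem_erase hμ)), one_pow]
    · have hsq : μ * μ = 1 := by
        nth_rw 1 [← hfix]; exact inv_mul_cancel₀ (hne μ (mem_of_mem_erase hμ))
      rcases mul_self_eq_one_iff.mp hsq with rfl | rfl
      · exact h1 (one_pow _)
      · exact ne_of_mem_erase hμ rfl
    · refine mem_erase.mpr ⟨fun h => ne_of_mem_erase hμ (by rw [← inv_inv μ, h, inv_neg_one]), ?_⟩
      exact (ht _).mpr ((hinv μ).symm ▸ (ht μ).mp (mem_of_mem_erase hμ))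
  by_cases hm : (-1 : K) ∈ t
  · rw [← mul_prod_erase t _ hm, hpair, mul_one]
  · rw [← erase_eq_of_notMem hm, hpair, not_not.mp (mt (ht _).mpr hm), pow_zero]

namespace Module.End

variable {K U : Type*} [Field K] [AddCommGroup U] [Module K U]

theorem det_eq_prod_pow_finrank_eigenspace [FiniteDimensional K U] (f : End K U)
    (hf : ⨆ μ, f.eigenspace μ = ⊤) :
    LinearMap.det f = ∏ μ ∈ f.finite_hasEigenvalue.toFinset, μ ^ finrank K (f.eigenspace μ) := by
  classical
  have hsup : ⨆ μ : f.Eigenvalues, f.eigenspace (μ : K) = ⊤ := by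
    refine eq_top_iff.mpr (hf ▸ iSup_le fun μ => ?_)
    by_cases hμ : f.HasEigenvalue μ
    · exact le_iSup (fun ν : f.Eigenvalues => f.eigenspace (ν : K)) ⟨μ, hμ⟩
    · simp [hasEigenvalue_iff.not_left.mp hμ]
  have hI : DirectSum.IsInternal fun μ : f.Eigenvalues => f.eigenspace (μ : K) :=
    DirectSum.isInternal_submodule_of_iSupIndep_of_iSup_eq_top
      (f.eigenspaces_iSupIndep.comp Subtype.val_injective) hsup
  let b := hI.collectedBasis fun μ => finBasis K (f.eigenspace (μ : K))
  have hdiag : LinearMap.toMatrix b b f = Matrix.diagonal fun i => (i.1 : K) := by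
    ext i j
    rw [LinearMap.toMatrix_apply, mem_eigenspace_iff.mp (hI.collectedBasis_mem _ j), map_smul,
      b.repr_self, Finsupp.smul_apply, Finsupp.single_apply, Matrix.diagonal_apply]
    split_ifs <;> simp_all
  rw [← LinearMap.det_toMatrix b, hdiag, Matrix.det_diagonal, ← Finset.univ_sigma_univ,
    Finset.prod_sigma]
  simp only [Finset.prod_const, Finset.card_univ, Fintype.card_fin]
  exact (Finset.prod_subtype _ (fun μ => Set.Finite.mem_toFinset _)
    fun μ => μ ^ finrank K (f.eigenspace μ)).symm

theorem apply_eq_zero_of_mem_eigenspace_of_mul_ne_one {f : End K U} {B : LinearMap.BilinForm K U}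
    (hiso : ∀ v w, B (f v) (f w) = B v w) {μ ν : K} (hμν : μ * ν ≠ 1) {v w : U}
    (hv : v ∈ f.eigenspace μ) (hw : w ∈ f.eigenspace ν) : B v w = 0 := by
  have h : μ * ν * B v w = B v w :=
    calc μ * ν * B v w = B (μ • v) (ν • w) := by
          simp only [map_smul, LinearMap.smul_apply, smul_eq_mul]; ring
      _ = B v w := by rw [← mem_eigenspace_iff.mp hv, ← mem_eigenspace_iff.mp hw, hiso]
  exact (mul_left_eq_self₀.mp h).resolve_left hμν

theorem finrank_eigenspace_le_finrank_eigenspace_inv [FiniteDimensional K U] {f : End K U}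
    {B : LinearMap.BilinForm K U} (hB : B.SeparatingLeft) (hiso : ∀ v w, B (f v) (f w) = B v w)
    (hf : ⨆ μ, f.eigenspace μ = ⊤) (μ : K) :
    finrank K (f.eigenspace μ) ≤ finrank K (f.eigenspace μ⁻¹) := by
  let φ := (f.eigenspace μ⁻¹).dualRestrict ∘ₗ B ∘ₗ (f.eigenspace μ).subtype
  suffices hφ : Function.Injective φ from
    (LinearMap.finrank_le_finrank_of_injective hφ).trans_eq Subspace.dual_finrank_eq
  refine (injective_iff_map_eq_zero φ).mpr fun v hv => Subtype.ext (hB v fun w => ?_)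
  suffices ⊤ ≤ LinearMap.ker (B v) from this (Submodule.mem_top (x := w))
  refine hf ▸ iSup_le fun ν x hx => ?_
  by_cases hν : ν = μ⁻¹
  · subst hν
    exact LinearMap.congr_fun hv ⟨x, hx⟩
  · exact apply_eq_zero_of_mem_eigenspace_of_mul_ne_one hiso
      (fun h => hν (eq_inv_of_mul_eq_one_right h)) v.2 hx

theorem det_eq_neg_one_pow_finrank_eigenspace [FiniteDimensional K U] {f : End K U}
    {B : LinearMap.BilinForm K U} (hB : B.SeparatingLeft) (hiso : ∀ v w, B (f v) (f w) = B v w)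
    (hf : ⨆ μ, f.eigenspace μ = ⊤) :
    LinearMap.det f = (-1) ^ finrank K (f.eigenspace (-1)) := by
  have hker : LinearMap.ker f = ⊥ :=
    LinearMap.ker_eq_bot'.mpr fun v hv => hB v fun w => by rw [← hiso, hv, map_zero,
      LinearMap.zero_apply]
  rw [det_eq_prod_pow_finrank_eigenspace f hf]
  refine Finset.prod_pow_eq_neg_one_pow_of_inv_invariant _ _ (fun μ hμ => ?_) ?_ fun μ => ?_
  · exact (Set.Finite.mem_toFinset _).mpr
      (hasEigenvalue_iff.mpr fun h => hμ (by rw [h, finrank_bot]))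
  · rw [eigenspace_zero, hker, finrank_bot]
  · refine le_antisymm ?_ (finrank_eigenspace_le_finrank_eigenspace_inv hB hiso hf μ)
    have := finrank_eigenspace_le_finrank_eigenspace_inv hB hiso hf μ⁻¹
    rwa [inv_inv] at this

theorem iSup_eigenspace_map_eq_top {R M N : Type*} [CommRing R] [AddCommGroup M] [Module R M]
    [AddCommGroup N] [Module R N] {f : End R M} {g : End R N} (hf : ⨆ μ, f.eigenspace μ = ⊤)
    (hg : ⨆ ν, g.eigenspace ν = ⊤) : ⨆ μ, eigenspace (map f g) μ = ⊤ := by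
  rw [eq_top_iff, ← map₂_mk_top_top_eq_top, ← hf, ← hg, Submodule.map₂_iSup_left]
  refine iSup_le fun μ => ?_
  rw [Submodule.map₂_iSup_right]
  refine iSup_le fun ν => le_iSup_of_le (μ * ν) (Submodule.map₂_le.mpr fun v hv w hw => ?_)
  rw [mem_eigenspace_iff, mk_apply, map_tmul, mem_eigenspace_iff.mp hv, mem_eigenspace_iff.mp hw,
    smul_tmul_smul]

end Module.End

theorem TensorProduct.det_map {R M N : Type*} [CommRing R] [Nontrivial R] [AddCommGroup M]
    [Module R M] [Module.Free R M] [Module.Finite R M] [AddCommGroup N] [Module R N]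
    [Module.Free R N] [Module.Finite R N] (f : End R M) (g : End R N) :
    LinearMap.det (map f g) = LinearMap.det f ^ finrank R N * LinearMap.det g ^ finrank R M := by
  classical
  let b := Free.chooseBasis R M
  let c := Free.chooseBasis R N
  rw [← LinearMap.det_toMatrix (b.tensorProduct c), toMatrix_map, Matrix.det_kronecker,
    LinearMap.det_toMatrix, LinearMap.det_toMatrix, finrank_eq_card_chooseBasisIndex,
    finrank_eq_card_chooseBasisIndex]

namespace LinearMap

variable {K V W : Type*} [Field K] [AddCommGroup V] [Module K V] [AddCommGroup W] [Module K W]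
  {B₁ : LinearMap.BilinForm K V} {B₂ : LinearMap.BilinForm K W}

theorem SeparatingLeft.tmul [FiniteDimensional K V] [FiniteDimensional K W]
    (h₁ : B₁.SeparatingLeft) (h₂ : B₂.SeparatingLeft) : (B₁.tmul B₂).SeparatingLeft := by
  rw [separatingLeft_iff_ker_eq_bot, ker_eq_bot] at *
  have : B₁.tmul B₂ = dualDistrib K V W ∘ₗ map B₁ B₂ :=
    ext' fun v w => ext' fun v' w' => by simp [mul_comm]
  rw [this]
  exact (dualDistribEquiv K V W).injective.comp (map_injective_of_flat_flat _ _ h₁ h₂)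

theorem BilinForm.tmul_map_map {f₁ : Module.End K V} {f₂ : Module.End K W}
    (h₁ : ∀ v v', B₁ (f₁ v) (f₁ v') = B₁ v v') (h₂ : ∀ w w', B₂ (f₂ w) (f₂ w') = B₂ w w')
    (x y : V ⊗[K] W) : B₁.tmul B₂ (map f₁ f₂ x) (map f₁ f₂ y) = B₁.tmul B₂ x y := by
  have : (B₁.tmul B₂).compl₁₂ (map f₁ f₂) (map f₁ f₂) = B₁.tmul B₂ :=
    ext' fun v w => ext' fun v' w' => by simp [h₁, h₂]
  exact congr_fun₂ this x y

end LinearMap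

theorem Nat.modEq_two_of_neg_one_pow_eq {R : Type*} [Ring R] (h : (-1 : R) ≠ 1) {m n : ℕ}
    (hmn : (-1 : R) ^ m = (-1) ^ n) : m ≡ n [MOD 2] := by
  rw [neg_one_pow_eq_pow_mod_two, neg_one_pow_eq_pow_mod_two (n := n)] at hmn
  rcases Nat.mod_two_eq_zero_or_one m with hm | hm <;>
    rcases Nat.mod_two_eq_zero_or_one n with hn | hn <;> simp_all [Nat.ModEq, eq_comm]

theorem dim_minus_one_eigenspace_tensor_of_nonspecial_general
    (V W : Type*) [AddCommGroup V] [Module ℂ V] [FiniteDimensional ℂ V]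
    [AddCommGroup W] [Module ℂ W] [FiniteDimensional ℂ W]
    (BV : V →ₗ[ℂ] V →ₗ[ℂ] ℂ) (BW : W →ₗ[ℂ] W →ₗ[ℂ] ℂ)
    (hVnd : ∀ v : V, (∀ w : V, BV v w = 0) → v = 0)
    (hWnd : ∀ v : W, (∀ w : W, BW v w = 0) → v = 0)
    (g : V ≃ₗ[ℂ] V) (h : W ≃ₗ[ℂ] W)
    (hdg : (⨆ μ : ℂ, Module.End.eigenspace (g : V →ₗ[ℂ] V) μ) = ⊤)
    (hdh : (⨆ μ : ℂ, Module.End.eigenspace (h : W →ₗ[ℂ] W) μ) = ⊤)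
    (hgiso : ∀ v w : V, BV (g v) (g w) = BV v w)
    (hhiso : ∀ v w : W, BW (h v) (h w) = BW v w)
    (hgdet : LinearMap.det (g : V →ₗ[ℂ] V) = -1)
    (hhdet : LinearMap.det (h : W →ₗ[ℂ] W) = 1) :
    Module.finrank ℂ
        (Module.End.eigenspace (TensorProduct.map (g : V →ₗ[ℂ] V) (h : W →ₗ[ℂ] W)) (-1)) ≡
      Module.finrank ℂ W [MOD 2] := by
  have hdet := End.det_eq_neg_one_pow_finrank_eigenspace
    (LinearMap.SeparatingLeft.tmul (B₁ := BV) (B₂ := BW) hVnd hWnd)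
    (LinearMap.BilinForm.tmul_map_map hgiso hhiso) (End.iSup_eigenspace_map_eq_top hdg hdh)
  rw [TensorProduct.det_map, hgdet, hhdet, one_pow, mul_one] at hdet
  exact Nat.modEq_two_of_neg_one_pow_eq (by norm_num) hdet.symm

/-- Let `V` and `W` be finite-dimensional complex vector spaces with
nondegenerate symmetric bilinear forms, and `g, h` diagonalizable isometries of `V, W`
respectively.  If `det g = -1` and `det h = 1`, then
`dim E_{-1}(g ⊗ h) ≡ dim W (mod 2)`. -/
theorem dim_minus_one_eigenspace_tensor_of_nonspecial
    (V W : Type*) [AddCommGroup V] [Module ℂ V] [FiniteDimensional ℂ V]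
    [AddCommGroup W] [Module ℂ W] [FiniteDimensional ℂ W]
    (BV : V →ₗ[ℂ] V →ₗ[ℂ] ℂ) (BW : W →ₗ[ℂ] W →ₗ[ℂ] ℂ)
    (hVsymm : ∀ v w : V, BV v w = BV w v)
    (hVnd : ∀ v : V, (∀ w : V, BV v w = 0) → v = 0)
    (hWsymm : ∀ v w : W, BW v w = BW w v)
    (hWnd : ∀ v : W, (∀ w : W, BW v w = 0) → v = 0)
    (g : V ≃ₗ[ℂ] V) (h : W ≃ₗ[ℂ] W)
    (hdg : (⨆ μ : ℂ, Module.End.eigenspace (g : V →ₗ[ℂ] V) μ) = ⊤)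
    (hdh : (⨆ μ : ℂ, Module.End.eigenspace (h : W →ₗ[ℂ] W) μ) = ⊤)
    (hgiso : ∀ v w : V, BV (g v) (g w) = BV v w)
    (hhiso : ∀ v w : W, BW (h v) (h w) = BW v w)
    (hgdet : LinearMap.det (g : V →ₗ[ℂ] V) = -1)
    (hhdet : LinearMap.det (h : W →ₗ[ℂ] W) = 1) :
    Module.finrank ℂ
        (Module.End.eigenspace (TensorProduct.map (g : V →ₗ[ℂ] V) (h : W →ₗ[ℂ] W)) (-1)) ≡
      Module.finrank ℂ W [MOD 2] :=
  dim_minus_one_eigenspace_tensor_of_nonspecial_general V W BV BW hVnd hWnd g h hdg hdh hgiso hhiso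
    hgdet hhdet
end

section
/- Let T be the subgroup of diagonal matrices in SL₆(ℂ), and let ρ be the representation of SL₆(ℂ) on the third exterior power Λ³ℂ⁶ induced by the standard action on ℂ⁶. Then there exist T-invariant subspaces W and W' of Λ³ℂ⁶ with Λ³ℂ⁶ = W ⊕ W', such that W' with its T-action is isomorphic to the dual representation of W, and there exists a group homomorphism χ : T → ℂ^× such that det(ρ(t)|_W) = χ(t)² for all t ∈ T. (That is, the exterior cube representation of SL₆(ℂ) is anomaly free with respect to its diagonal maximal torus, with η trivial.) -/
noncomputable section

set_option maxHeartbeats 1000000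
set_option synthInstance.maxHeartbeats 400000

private lemma submodulePowMono {R A : Type*} [CommSemiring R] [Semiring A] [Algebra R A]
    {p q : Submodule R A} (h : p ≤ q) : ∀ n : ℕ, p ^ n ≤ q ^ n
  | 0 => le_rfl
  | n + 1 => by
      rw [pow_succ, pow_succ]
      exact mul_le_mul' (submodulePowMono h n) h

/-- The functorial action of an endomorphism on the `n`-th exterior power. -/
lemma extPower_map_mem {M : Type*} [AddCommGroup M] [Module ℂ M]
    (n : ℕ) (f : M →ₗ[ℂ] M) {x : ExteriorAlgebra ℂ M} (hx : x ∈ ⋀[ℂ]^n M) :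
    ExteriorAlgebra.map f x ∈ ⋀[ℂ]^n M := by
  have h0 : Submodule.map (AlgHom.toLinearMap (ExteriorAlgebra.map f))
      (LinearMap.range (ExteriorAlgebra.ι ℂ (M := M))) ≤
      LinearMap.range (ExteriorAlgebra.ι ℂ (M := M)) := by
    rw [ExteriorAlgebra.ι_range_map_map]
    rintro y ⟨m, -, rfl⟩
    exact LinearMap.mem_range_self _ m
  have h1 : Submodule.map (AlgHom.toLinearMap (ExteriorAlgebra.map f)) (⋀[ℂ]^n M) ≤
      ⋀[ℂ]^n M := by
    rw [show (⋀[ℂ]^n M : Submodule ℂ (ExteriorAlgebra ℂ M)) =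
        LinearMap.range (ExteriorAlgebra.ι ℂ (M := M)) ^ n from rfl, Submodule.map_pow]
    exact submodulePowMono h0 n
  exact h1 (Submodule.mem_map_of_mem hx)

/-- The representation of `SL₆(ℂ)` on the third exterior power `Λ³ℂ⁶` induced by the
standard action on `ℂ⁶`. -/
def extCubeRep :
    Representation ℂ (Matrix.SpecialLinearGroup (Fin 6) ℂ) (⋀[ℂ]^3 (Fin 6 → ℂ)) where
  toFun A :=
    (AlgHom.toLinearMap (ExteriorAlgebra.map
      (Matrix.toLin' (A : Matrix (Fin 6) (Fin 6) ℂ)))).restrict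
      (fun _ hx => extPower_map_mem 3 _ hx)
  map_one' := by
    refine LinearMap.ext fun x => Subtype.ext ?_
    simp [LinearMap.restrict_apply, Matrix.SpecialLinearGroup.coe_one, Matrix.toLin'_one,
      ExteriorAlgebra.map_id]
  map_mul' A B := by
    refine LinearMap.ext fun x => Subtype.ext ?_
    show ExteriorAlgebra.map
        (Matrix.toLin' ((A * B : Matrix.SpecialLinearGroup (Fin 6) ℂ) :
          Matrix (Fin 6) (Fin 6) ℂ)) (x : ExteriorAlgebra ℂ (Fin 6 → ℂ)) =
      ExteriorAlgebra.map (Matrix.toLin' (A : Matrix (Fin 6) (Fin 6) ℂ))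
        (ExteriorAlgebra.map (Matrix.toLin' (B : Matrix (Fin 6) (Fin 6) ℂ))
          (x : ExteriorAlgebra ℂ (Fin 6 → ℂ)))
    rw [Matrix.SpecialLinearGroup.coe_mul, Matrix.toLin'_mul]
    exact (DFunLike.congr_fun (ExteriorAlgebra.map_comp_map
      (Matrix.toLin' (B : Matrix (Fin 6) (Fin 6) ℂ))
      (Matrix.toLin' (A : Matrix (Fin 6) (Fin 6) ℂ)))
      (x : ExteriorAlgebra ℂ (Fin 6 → ℂ))).symm

/-- The subgroup of diagonal matrices in `SL₆(ℂ)`. -/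
def diagonalTorus : Subgroup (Matrix.SpecialLinearGroup (Fin 6) ℂ) where
  carrier := {A | Matrix.IsDiag (A : Matrix (Fin 6) (Fin 6) ℂ)}
  one_mem' := by
    show Matrix.IsDiag ((1 : Matrix.SpecialLinearGroup (Fin 6) ℂ) : Matrix (Fin 6) (Fin 6) ℂ)
    rw [Matrix.SpecialLinearGroup.coe_one]
    exact Matrix.isDiag_one
  mul_mem' := by
    intro a b ha hb
    simp only [Set.mem_setOf_eq, Matrix.SpecialLinearGroup.coe_mul]
    intro i j hij
    rw [Matrix.mul_apply]
    apply Finset.sum_eq_zero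
    intro k _
    rcases eq_or_ne i k with rfl | hik
    · rw [hb hij, mul_zero]
    · rw [ha hik, zero_mul]
  inv_mem' := by
    intro a ha
    have hdet : (a : Matrix (Fin 6) (Fin 6) ℂ).det = 1 := a.2
    have hdiag : Matrix.diagonal (Matrix.diag (a : Matrix (Fin 6) (Fin 6) ℂ)) =
        (a : Matrix (Fin 6) (Fin 6) ℂ) := ha.diagonal_diag
    have hprod : ∏ i, Matrix.diag (a : Matrix (Fin 6) (Fin 6) ℂ) i = 1 := by
      rw [← Matrix.det_diagonal, hdiag, hdet]
    have hne : ∀ i, Matrix.diag (a : Matrix (Fin 6) (Fin 6) ℂ) i ≠ 0 := by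
      intro i hi
      have := Finset.prod_eq_zero (Finset.mem_univ i) hi
      rw [hprod] at this
      exact one_ne_zero this
    set d := Matrix.diag (a : Matrix (Fin 6) (Fin 6) ℂ) with hd
    have hdetinv : (Matrix.diagonal fun i => (d i)⁻¹).det = 1 := by
      rw [Matrix.det_diagonal, Finset.prod_inv_distrib, hprod, inv_one]
    set b : Matrix.SpecialLinearGroup (Fin 6) ℂ :=
      ⟨Matrix.diagonal fun i => (d i)⁻¹, hdetinv⟩ with hb
    have hab : a * b = 1 := by
      apply Subtype.ext
      rw [Matrix.SpecialLinearGroup.coe_mul]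
      show (a : Matrix (Fin 6) (Fin 6) ℂ) * Matrix.diagonal (fun i => (d i)⁻¹) = _
      rw [← hdiag, Matrix.diagonal_mul_diagonal]
      rw [Matrix.SpecialLinearGroup.coe_one]
      have : (fun i => d i * (d i)⁻¹) = fun _ => (1 : ℂ) := by
        funext i; exact mul_inv_cancel₀ (hne i)
      rw [this, Matrix.diagonal_one]
    have hinv : a⁻¹ = b := inv_eq_of_mul_eq_one_right hab
    show Matrix.IsDiag ((a⁻¹ : Matrix.SpecialLinearGroup (Fin 6) ℂ) :
      Matrix (Fin 6) (Fin 6) ℂ)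
    rw [hinv]
    exact Matrix.isDiag_diagonal _

/-!
In the basis `e_S = e_{s₁} ∧ e_{s₂} ∧ e_{s₃}` of `Λ³ℂ⁶` induced by the standard basis, a diagonal
`t` acts on `e_S` by the weight `t_S = ∏_{i ∈ S} tᵢᵢ`. As `∏ᵢ tᵢᵢ = 1`, the weight of `Sᶜ` is
`t_S⁻¹`. Hence the spans `W` of the `e_S` with `0 ∈ S` and `W'` of the `e_S` with `0 ∉ S` are
`T`-stable complements, and `S ↦ Sᶜ` identifies `W'` with the dual of `W`. Finally `0` lies in ten
of the sets `S ∋ 0` and every other index in four, so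
`det(t|W) = t₀₀¹⁰ ∏_{i ≠ 0} tᵢᵢ⁴ = t₀₀⁶ = (t₀₀³)²`.
-/

open Module Submodule Set.powersetCard

namespace Module.Basis

variable {R M ι : Type*} [Ring R] [AddCommGroup M] [Module R M] (b : Basis ι R M)

def restrictSpan (s : Set ι) : Basis s R (span R (Set.range fun i : s => b i)) :=
  .span (b.linearIndependent.comp _ Subtype.val_injective)

lemma coe_restrictSpan_apply (s : Set ι) (i : s) : (b.restrictSpan s i : M) = b i :=
  Basis.coe_span_apply _ i

lemma isCompl_span_range_restrict_compl (s : Set ι) :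
    IsCompl (span R (Set.range fun i : s => b i)) (span R (Set.range fun i : ↥sᶜ => b i)) := by
  simpa only [Set.image_eq_range] using
    b.linearIndependent.isCompl_span_image b.span_eq isCompl_compl

variable {b} {f : M →ₗ[R] M} {d : ι → R}

lemma apply_mem_span_restrict_of_apply_eq_smul (hf : ∀ i, f (b i) = d i • b i) (s : Set ι) :
    ∀ v ∈ span R (Set.range fun i : s => b i), f v ∈ span R (Set.range fun i : s => b i) := by
  intro v hv
  refine (map_span_le f _ _).2 ?_ (mem_map_of_mem hv)
  rintro _ ⟨i, rfl⟩
  rw [hf]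
  exact smul_mem _ _ (subset_span ⟨i, rfl⟩)

lemma restrict_apply_restrictSpan (hf : ∀ i, f (b i) = d i • b i) (s : Set ι) (i : s) :
    f.restrict (apply_mem_span_restrict_of_apply_eq_smul hf s) (b.restrictSpan s i) =
      d i • b.restrictSpan s i :=
  Subtype.ext <| by
    rw [LinearMap.coe_restrict_apply, coe_restrictSpan_apply, hf, SetLike.val_smul,
      coe_restrictSpan_apply]

end Module.Basis

lemma LinearMap.det_eq_prod_of_apply_basis_eq_smul {R M ι : Type*} [CommRing R] [AddCommGroup M]
    [Module R M] [Fintype ι] [DecidableEq ι] (b : Basis ι R M) {f : M →ₗ[R] M} {d : ι → R}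
    (hf : ∀ i, f (b i) = d i • b i) : f.det = ∏ i, d i := by
  have : LinearMap.toMatrix b b f = Matrix.diagonal d := by
    ext i j
    rcases eq_or_ne i j with rfl | hij
    · simp [LinearMap.toMatrix_apply, hf]
    · simp [LinearMap.toMatrix_apply, hf, hij]
  rw [← LinearMap.det_toMatrix b, this, Matrix.det_diagonal]

lemma Module.Basis.equiv_dualBasis_apply_apply_comm {R M M' ι ι' : Type*} [CommRing R]
    [AddCommGroup M] [Module R M] [AddCommGroup M'] [Module R M'] [Finite ι] [DecidableEq ι]
    (b : Basis ι R M) (b' : Basis ι' R M') (c : ι' ≃ ι) {f : M →ₗ[R] M} {f' : M' →ₗ[R] M'}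
    {d : ι → R} {d' : ι' → R} (hf : ∀ i, f (b i) = d i • b i)
    (hf' : ∀ j, f' (b' j) = d' j • b' j) (hd : ∀ j, d' j = d (c j)) (w' : M') (w : M) :
    b'.equiv b.dualBasis c (f' w') w = b'.equiv b.dualBasis c w' (f w) := by
  suffices h : (b'.equiv b.dualBasis c).toLinearMap ∘ₗ f' =
      f.dualMap ∘ₗ (b'.equiv b.dualBasis c).toLinearMap from
    LinearMap.congr_fun (LinearMap.congr_fun h w') w
  refine b'.ext fun j => b.ext fun i => ?_
  simp only [LinearMap.comp_apply, LinearEquiv.coe_coe, LinearMap.dualMap_apply, hf', hf,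
    map_smul, LinearMap.smul_apply, equiv_apply, dualBasis_apply_self, smul_eq_mul, hd]
  split_ifs with h
  · rw [h]
  · simp

namespace exteriorPower

variable {R M I : Type*} [CommRing R] [AddCommGroup M] [Module R M] [LinearOrder I] {n : ℕ}

lemma map_basis_of_apply_eq_smul (b : Basis I R M) {f : M →ₗ[R] M} {d : I → R}
    (hf : ∀ i, f (b i) = d i • b i) (s : Set.powersetCard I n) :
    map n f (b.exteriorPower n s) = (∏ i ∈ (s : Finset I), d i) • b.exteriorPower n s := by
  have hprod :
      ∏ k : Fin n, d ((ofFinEmbEquiv.symm s : Fin n ↪o I) k) = ∏ i ∈ (s : Finset I), d i := by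
    rw [← Finset.prod_coe_sort s.1 d]
    exact Fintype.prod_equiv (Finset.orderIsoOfFin _ s.prop).toEquiv _ _ fun _ => rfl
  rw [basis_apply, map_apply_ιMulti_family, ιMulti_family, ιMulti_family, ← hprod,
    ← AlternatingMap.map_smul_univ]
  congr 1
  ext1 k
  exact hf _

end exteriorPower

lemma Finset.prod_prod_eq_prod_pow_card {κ α M : Type*} [Fintype κ] [Fintype α] [DecidableEq α]
    [CommMonoid M] (g : κ → Finset α) (d : α → M) :
    ∏ k, ∏ i ∈ g k, d i = ∏ i, d i ^ Fintype.card {k // i ∈ g k} := by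
  rw [Finset.prod_comm' (t' := univ) (s' := fun i => {k | i ∈ g k}) (by simp)]
  simp [Fintype.card_subtype]

lemma Finset.prod_compl_eq_prod_of_mul_eq_one {α M : Type*} [Fintype α] [DecidableEq α]
    [CommMonoid M] {d d' : α → M} (hd : ∏ i, d i = 1) (hd' : ∀ i, d' i * d i = 1)
    (s : Finset α) : ∏ i ∈ sᶜ, d' i = ∏ i ∈ s, d i :=
  calc ∏ i ∈ sᶜ, d' i = (∏ i ∈ sᶜ, d' i) * ∏ i, d i := by rw [hd, mul_one]
    _ = (∏ i ∈ sᶜ, d' i * d i) * ∏ i ∈ s, d i := by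
      rw [← prod_compl_mul_prod s, prod_mul_distrib, mul_assoc]
    _ = ∏ i ∈ s, d i := by simp [hd']

namespace diagonalTorus

lemma isDiag (t : diagonalTorus) : (t : Matrix (Fin 6) (Fin 6) ℂ).IsDiag := t.2

def diagEntries : diagonalTorus →* (Fin 6 → ℂ) where
  toFun t := Matrix.diag (t : Matrix (Fin 6) (Fin 6) ℂ)
  map_one' := by simp
  map_mul' a b := by
    rw [Subgroup.coe_mul, Matrix.SpecialLinearGroup.coe_mul, ← (isDiag a).diagonal_diag,
      ← (isDiag b).diagonal_diag, Matrix.diagonal_mul_diagonal, Matrix.diag_diagonal,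
      Matrix.diag_diagonal, Matrix.diag_diagonal]
    rfl

lemma prod_diagEntries (t : diagonalTorus) : ∏ i, diagEntries t i = 1 := by
  rw [← Matrix.det_diagonal]
  exact (isDiag t).diagonal_diag.symm ▸ (t : Matrix.SpecialLinearGroup (Fin 6) ℂ).2

lemma diagEntries_inv_mul (t : diagonalTorus) (i : Fin 6) :
    diagEntries t⁻¹ i * diagEntries t i = 1 := by
  rw [← Pi.mul_apply, ← map_mul, inv_mul_cancel, map_one, Pi.one_apply]

lemma prod_compl_diagEntries_inv (t : diagonalTorus) (s : Finset (Fin 6)) :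
    ∏ i ∈ sᶜ, diagEntries t⁻¹ i = ∏ i ∈ s, diagEntries t i :=
  Finset.prod_compl_eq_prod_of_mul_eq_one (prod_diagEntries t) (diagEntries_inv_mul t) s

lemma toLin'_basisFun (t : diagonalTorus) (i : Fin 6) :
    Matrix.toLin' (t : Matrix (Fin 6) (Fin 6) ℂ) (Pi.basisFun ℂ (Fin 6) i) =
      diagEntries t i • Pi.basisFun ℂ (Fin 6) i := by
  have := (hasEigenvector_toLin'_diagonal (diagEntries t) i).apply_eq_smul
  rwa [show Matrix.diagonal (diagEntries t) = t from (isDiag t).diagonal_diag] at this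

def entryUnit (i : Fin 6) : diagonalTorus →* ℂˣ :=
  (Units.map (Pi.evalMonoidHom (fun _ => ℂ) i)).comp diagEntries.toHomUnits

lemma coe_entryUnit (i : Fin 6) (t : diagonalTorus) : (entryUnit i t : ℂ) = diagEntries t i :=
  rfl

end diagonalTorus

lemma extCubeRep_eq_map (A : Matrix.SpecialLinearGroup (Fin 6) ℂ) :
    extCubeRep A = exteriorPower.map 3 (Matrix.toLin' (A : Matrix (Fin 6) (Fin 6) ℂ)) := by
  ext v : 3
  rw [LinearMap.compAlternatingMap_apply, LinearMap.compAlternatingMap_apply,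
    exteriorPower.map_apply_ιMulti, exteriorPower.ιMulti_apply_coe]
  exact ExteriorAlgebra.map_apply_ιMulti (Matrix.toLin' (A : Matrix (Fin 6) (Fin 6) ℂ)) v

lemma extCubeRep_torus_basis (t : diagonalTorus) (s : Set.powersetCard (Fin 6) 3) :
    extCubeRep t ((Pi.basisFun ℂ (Fin 6)).exteriorPower 3 s) =
      (∏ i ∈ (s : Finset (Fin 6)), diagonalTorus.diagEntries t i) •
        (Pi.basisFun ℂ (Fin 6)).exteriorPower 3 s := by
  rw [extCubeRep_eq_map]
  exact exteriorPower.map_basis_of_apply_eq_smul _ (diagonalTorus.toLin'_basisFun t) s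

def zeroMemTriples : Set (Set.powersetCard (Fin 6) 3) := {s | (0 : Fin 6) ∈ s}

def complZeroMemTriples : ↥zeroMemTriplesᶜ ≃ ↥zeroMemTriples :=
  (Set.powersetCard.compl (by simp)).subtypeEquiv fun s => by
    simp [zeroMemTriples, Set.powersetCard.mem_compl]

lemma card_zeroMemTriples_mem [Fintype zeroMemTriples] (i : Fin 6) :
    Fintype.card {s : zeroMemTriples // i ∈ ((s : Set.powersetCard (Fin 6) 3) : Finset (Fin 6))} =
      4 + if i = 0 then 6 else 0 := by
  let e : {s : zeroMemTriples // i ∈ ((s : Set.powersetCard (Fin 6) 3) : Finset (Fin 6))} ≃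
      {u : Finset (Fin 6) // u.card = 3 ∧ 0 ∈ u ∧ i ∈ u} :=
    { toFun s := ⟨s.1.1.1, s.1.1.2, s.1.2, s.2⟩
      invFun u := ⟨⟨⟨u.1, u.2.1⟩, u.2.2.1⟩, u.2.2.2⟩
      left_inv _ := rfl
      right_inv _ := rfl }
  -- The `Fintype` instance of `Set.powersetCard` is built with `rw`, so `decide` cannot unfold it.
  rw [Fintype.card_congr e]
  revert i
  decide

lemma prod_zeroMemTriples {M : Type*} [CommMonoid M] [Fintype zeroMemTriples] {d : Fin 6 → M}
    (hd : ∏ i, d i = 1) :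
    ∏ s : zeroMemTriples, ∏ i ∈ ((s : Set.powersetCard (Fin 6) 3) : Finset (Fin 6)), d i =
      d 0 ^ 6 := by
  simp only [Finset.prod_prod_eq_prod_pow_card, card_zeroMemTriples_mem, pow_add,
    Finset.prod_mul_distrib, Finset.prod_pow, hd, one_pow, one_mul, pow_ite, pow_zero]
  simp

/-- The exterior cube representation of `SL₆(ℂ)` is anomaly free with
respect to its diagonal maximal torus `T`, with `η` trivial: `Λ³ℂ⁶` decomposes as
`W ⊕ W'` with `W, W'` `T`-invariant, `W'` isomorphic as a `T`-representation to the dual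
of `W`, and `det` of the `T`-action on `W` is the square of a character of `T`. -/
theorem extCubeRep_anomaly_free :
    ∃ (W W' : Submodule ℂ (⋀[ℂ]^3 (Fin 6 → ℂ)))
      (hW : ∀ t : diagonalTorus, ∀ v ∈ W, extCubeRep ↑t v ∈ W)
      (hW' : ∀ t : diagonalTorus, ∀ v ∈ W', extCubeRep ↑t v ∈ W'),
      IsCompl W W' ∧
      (∃ e : W' ≃ₗ[ℂ] Module.Dual ℂ W,
        ∀ (t : diagonalTorus) (w' : W') (w : W),
          e ⟨extCubeRep ↑t ↑w', hW' t ↑w' w'.2⟩ w =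
            e w' ⟨extCubeRep ↑(t⁻¹) ↑w, hW t⁻¹ ↑w w.2⟩) ∧
      ∃ χ : diagonalTorus →* ℂˣ,
        ∀ t : diagonalTorus,
          LinearMap.det (M := W) (A := ℂ) ((extCubeRep ↑t).restrict (hW t)) = (χ t : ℂ) ^ 2 := by
  classical
  let B := (Pi.basisFun ℂ (Fin 6)).exteriorPower 3
  have hB := extCubeRep_torus_basis
  refine ⟨_, _, fun t => Basis.apply_mem_span_restrict_of_apply_eq_smul (hB t) zeroMemTriples,
    fun t => Basis.apply_mem_span_restrict_of_apply_eq_smul (hB t) zeroMemTriplesᶜ,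
    B.isCompl_span_range_restrict_compl zeroMemTriples,
    ⟨(B.restrictSpan _).equiv (B.restrictSpan _).dualBasis complZeroMemTriples, fun t w' w => ?_⟩,
    diagonalTorus.entryUnit 0 ^ 3, fun t => ?_⟩
  · have hdual := Basis.equiv_dualBasis_apply_apply_comm (B.restrictSpan zeroMemTriples)
      (B.restrictSpan zeroMemTriplesᶜ) complZeroMemTriples
      (Basis.restrict_apply_restrictSpan (hB t⁻¹) zeroMemTriples)
      (Basis.restrict_apply_restrictSpan (hB t) zeroMemTriplesᶜ)
      (fun s => (diagonalTorus.prod_compl_diagEntries_inv t _).symm) w' w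
    exact hdual
  · rw [LinearMap.det_eq_prod_of_apply_basis_eq_smul _
        (Basis.restrict_apply_restrictSpan (hB t) zeroMemTriples),
      prod_zeroMemTriples (diagonalTorus.prod_diagEntries t), MonoidHom.pow_apply,
      Units.val_pow_eq_pow_val, diagonalTorus.coe_entryUnit, ← pow_mul]
end
end
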